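/- arXiv:1905.01007 — 5 statements merged into one kernel-verified Lean document; each statement's English description precedes it below -/
import Mathlib

section
/- Let X and Y be Banach spaces, 1 ≤ p ≤ ∞, and T : X → Y a bounded linear operator. Then the following are equivalent: (i) T maps every subset of X that is both a Dunford-Pettis set and relatively weakly p-compact onto a relatively norm compact subset of Y; (ii) T maps every weakly p-summable sequence that is a Dunford-Pettis set (p-Right null sequence) onto a norm null sequence; (iii) T maps every weakly p-Cauchy sequence that is a Dunford-Pettis set (p-Right Cauchy sequence) onto a norm convergent sequence. -/
open Filter Topology Set
open scoped ENNReal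

noncomputable section

/-- A sequence in a normed space is weakly null. -/
def WeaklyNull {E : Type*} [NormedAddCommGroup E] [NormedSpace ℝ E] (x : ℕ → E) : Prop :=
  ∀ φ : E →L[ℝ] ℝ, Tendsto (fun n => φ (x n)) atTop (𝓝 0)

/-- A bounded set on which every weakly null sequence of functionals converges uniformly. -/
def DunfordPettisSet {E : Type*} [NormedAddCommGroup E] [NormedSpace ℝ E] (K : Set E) : Prop :=
  Bornology.IsBounded K ∧ ∀ f : ℕ → (E →L[ℝ] ℝ), WeaklyNull f →
    ∀ ε > 0, ∃ N : ℕ, ∀ n ≥ N, ∀ x ∈ K, |f n x| < ε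

/-- Weakly `p`-summable sequence; for `p = ∞` this means weakly null. -/
def WeaklyPSummable (p : ℝ≥0∞) {E : Type*} [NormedAddCommGroup E] [NormedSpace ℝ E]
    (x : ℕ → E) : Prop :=
  if p = ∞ then WeaklyNull x else ∀ φ : E →L[ℝ] ℝ, Memℓp (fun n => φ (x n)) p

def NormNull {E : Type*} [NormedAddCommGroup E] (x : ℕ → E) : Prop :=
  Tendsto (fun n => ‖x n‖) atTop (𝓝 0)

def PRightNull (p : ℝ≥0∞) {E : Type*} [NormedAddCommGroup E] [NormedSpace ℝ E]
    (x : ℕ → E) : Prop :=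
  WeaklyPSummable p x ∧ DunfordPettisSet (Set.range x)

def WeaklyPCauchy (p : ℝ≥0∞) {E : Type*} [NormedAddCommGroup E] [NormedSpace ℝ E]
    (x : ℕ → E) : Prop :=
  ∀ k l : ℕ → ℕ, StrictMono k → StrictMono l →
    WeaklyPSummable p (fun n => x (k n) - x (l n))

def PRightCauchy (p : ℝ≥0∞) {E : Type*} [NormedAddCommGroup E] [NormedSpace ℝ E]
    (x : ℕ → E) : Prop :=
  WeaklyPCauchy p x ∧ DunfordPettisSet (Set.range x)

/-- `p`-Dunford-Pettis relatively compact property. -/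
def HasDPrcP (p : ℝ≥0∞) (E : Type*) [NormedAddCommGroup E] [NormedSpace ℝ E] : Prop :=
  ∀ x : ℕ → E, PRightNull p x → NormNull x

/-- A (not necessarily linear) map is Dunford-Pettis `p`-convergent. -/
def DPpConvergent (p : ℝ≥0∞) {E F : Type*} [NormedAddCommGroup E] [NormedSpace ℝ E]
    [NormedAddCommGroup F] (f : E → F) : Prop :=
  ∀ x : ℕ → E, PRightNull p x → NormNull (fun n => f (x n))

/-- A map is `p`-convergent. -/
def PConvergent (p : ℝ≥0∞) {E F : Type*} [NormedAddCommGroup E] [NormedSpace ℝ E]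
    [NormedAddCommGroup F] (f : E → F) : Prop :=
  ∀ x : ℕ → E, WeaklyPSummable p x → NormNull (fun n => f (x n))

/-- The adjoint of a continuous linear operator between normed spaces. -/
def opAdjoint {E F : Type*} [NormedAddCommGroup E] [NormedSpace ℝ E]
    [NormedAddCommGroup F] [NormedSpace ℝ F] (T : E →L[ℝ] F) :
    (F →L[ℝ] ℝ) →L[ℝ] (E →L[ℝ] ℝ) :=
  (ContinuousLinearMap.compL ℝ E F ℝ).flip T


/-- `K` is relatively weakly `p`-compact: every sequence in `K` has a weakly `p`-convergent
subsequence with limit in the ambient space. -/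
def RelWeaklyPCompact (p : ℝ≥0∞) {E : Type*} [NormedAddCommGroup E] [NormedSpace ℝ E]
    (K : Set E) : Prop :=
  ∀ x : ℕ → E, (∀ n, x n ∈ K) → ∃ (a : E) (φ : ℕ → ℕ), StrictMono φ ∧
    WeaklyPSummable p (fun n => x (φ n) - a)

section Aux

variable {E : Type*} [NormedAddCommGroup E] [NormedSpace ℝ E] {p : ℝ≥0∞}

lemma aux_wn_apply {f : ℕ → (E →L[ℝ] ℝ)} (hf : WeaklyNull f) (a : E) :
    Tendsto (fun n => f n a) atTop (𝓝 0) :=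
  hf (NormedSpace.inclusionInDoubleDual ℝ E a)

lemma wps_zero (p : ℝ≥0∞) : WeaklyPSummable p (fun _ : ℕ => (0 : E)) := by
  rw [WeaklyPSummable]
  split
  · intro φ; simpa using tendsto_const_nhds
  · intro φ
    have : (fun n : ℕ => φ (0 : E)) = (0 : ℕ → ℝ) := by
      funext n; simp
    rw [this]
    exact zero_memℓp

lemma toReal_pos_of_one_le (hp : 1 ≤ p) (hpi : p ≠ ∞) : 0 < p.toReal :=
  ENNReal.toReal_pos (zero_lt_one.trans_le hp).ne' hpi

lemma wps_weaklyNull (hp : 1 ≤ p) {x : ℕ → E} (h : WeaklyPSummable p x) : WeaklyNull x := by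
  by_cases hpi : p = ∞
  · rwa [WeaklyPSummable, if_pos hpi] at h
  · rw [WeaklyPSummable, if_neg hpi] at h
    intro φ
    have hpt : 0 < p.toReal := toReal_pos_of_one_le hp hpi
    have hs : Summable fun n => ‖φ (x n)‖ ^ p.toReal := (memℓp_gen_iff hpt).1 (h φ)
    have h0 : Tendsto (fun n => ‖φ (x n)‖ ^ p.toReal) atTop (𝓝 0) := hs.tendsto_atTop_zero
    have h1 : Tendsto (fun n => (‖φ (x n)‖ ^ p.toReal) ^ p.toReal⁻¹) atTop (𝓝 0) := by
      have := h0.rpow_const (p := p.toReal⁻¹) (Or.inr (by positivity))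
      simpa [Real.zero_rpow (inv_ne_zero hpt.ne')] using this
    have h2 : Tendsto (fun n => ‖φ (x n)‖) atTop (𝓝 0) := by
      refine h1.congr fun n => ?_
      exact Real.rpow_rpow_inv (norm_nonneg _) hpt.ne'
    simpa using tendsto_zero_iff_norm_tendsto_zero.2 (by simpa using h2)

lemma wps_comp (hp : 1 ≤ p) {x : ℕ → E} (h : WeaklyPSummable p x) {k : ℕ → ℕ}
    (hk : StrictMono k) : WeaklyPSummable p (fun n => x (k n)) := by
  by_cases hpi : p = ∞
  · rw [WeaklyPSummable, if_pos hpi] at h ⊢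
    intro φ
    exact (h φ).comp hk.tendsto_atTop
  · rw [WeaklyPSummable, if_neg hpi] at h ⊢
    intro φ
    have hpt : 0 < p.toReal := toReal_pos_of_one_le hp hpi
    refine (memℓp_gen_iff hpt).2 ?_
    exact ((memℓp_gen_iff hpt).1 (h φ)).comp_injective hk.injective

lemma dp_diff {K : Set E} (h : DunfordPettisSet K) {u v : ℕ → E}
    (hu : ∀ n, u n ∈ K) (hv : ∀ n, v n ∈ K) :
    DunfordPettisSet (Set.range fun n => u n - v n) := by
  obtain ⟨hb, hun⟩ := h
  constructor
  · rw [isBounded_iff_forall_norm_le] at hb ⊢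
    obtain ⟨C, hC⟩ := hb
    refine ⟨C + C, ?_⟩
    rintro w ⟨n, rfl⟩
    exact (norm_sub_le _ _).trans (add_le_add (hC _ (hu n)) (hC _ (hv n)))
  · intro f hf ε hε
    obtain ⟨N, hN⟩ := hun f hf (ε / 2) (by positivity)
    refine ⟨N, ?_⟩
    rintro n hn w ⟨m, rfl⟩
    have : |f n (u m - v m)| ≤ |f n (u m)| + |f n (v m)| := by
      rw [map_sub]; exact abs_sub _ _
    calc |f n (u m - v m)| ≤ |f n (u m)| + |f n (v m)| := this
      _ < ε / 2 + ε / 2 := add_lt_add (hN n hn _ (hu m)) (hN n hn _ (hv m))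
      _ = ε := by ring

lemma dp_translate {K : Set E} (h : DunfordPettisSet K) {u : ℕ → E}
    (hu : ∀ n, u n ∈ K) (a : E) :
    DunfordPettisSet (Set.range fun n => u n - a) := by
  obtain ⟨hb, hun⟩ := h
  constructor
  · rw [isBounded_iff_forall_norm_le] at hb ⊢
    obtain ⟨C, hC⟩ := hb
    refine ⟨C + ‖a‖, ?_⟩
    rintro w ⟨n, rfl⟩
    exact (norm_sub_le _ _).trans (add_le_add (hC _ (hu n)) le_rfl)
  · intro f hf ε hε
    obtain ⟨N1, hN1⟩ := hun f hf (ε / 2) (by positivity)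
    have ha : Tendsto (fun n => f n a) atTop (𝓝 0) := aux_wn_apply hf a
    have ha' : ∀ᶠ n in atTop, |f n a| < ε / 2 := by
      have := ha.eventually (gt_mem_nhds (show (0 : ℝ) < ε / 2 by positivity))
      filter_upwards [ha.eventually (eventually_abs_sub_lt 0 (show (0:ℝ) < ε/2 by positivity))]
        with n hn
      simpa using hn
    obtain ⟨N2, hN2⟩ := eventually_atTop.1 ha'
    refine ⟨max N1 N2, ?_⟩
    rintro n hn w ⟨m, rfl⟩
    have h1 : |f n (u m)| < ε / 2 := hN1 n (le_trans (le_max_left _ _) hn) _ (hu m)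
    have h2 : |f n a| < ε / 2 := hN2 n (le_trans (le_max_right _ _) hn)
    have : |f n (u m - a)| ≤ |f n (u m)| + |f n a| := by
      rw [map_sub]; exact abs_sub _ _
    calc |f n (u m - a)| ≤ |f n (u m)| + |f n a| := this
      _ < ε / 2 + ε / 2 := add_lt_add h1 h2
      _ = ε := by ring

lemma exists_strictMono_subseq {g : ℕ → ℕ} (hg : Tendsto g atTop atTop) :
    ∃ φ : ℕ → ℕ, StrictMono φ ∧ StrictMono (g ∘ φ) := by
  have H : ∀ m N : ℕ, ∃ n, N ≤ n ∧ m < g n := by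
    intro m N
    exact ((eventually_ge_atTop N).and (hg.eventually (eventually_gt_atTop m))).exists
  choose f hf1 hf2 using H
  set F : ℕ → ℕ := fun k => Nat.rec (f 0 0) (fun _ prev => f (g prev) (prev + 1)) k with hFdef
  have hF : ∀ k, F (k + 1) = f (g (F k)) (F k + 1) := fun k => rfl
  refine ⟨F, strictMono_nat_of_lt_succ fun k => ?_, strictMono_nat_of_lt_succ fun k => ?_⟩
  · rw [hF]
    exact lt_of_lt_of_le (Nat.lt_succ_self _) (hf1 _ _)
  · show g (F k) < g (F (k + 1))
    rw [hF]
    exact hf2 (g (F k)) (F k + 1)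

lemma exists_pair_subseq {P : ℕ → ℕ → Prop}
    (H : ∀ N : ℕ, ∃ a, N ≤ a ∧ ∃ b, N ≤ b ∧ P a b) :
    ∃ k l : ℕ → ℕ, StrictMono k ∧ StrictMono l ∧ ∀ n, P (k n) (l n) := by
  choose a ha b hb hP using H
  set F : ℕ → ℕ := fun n => Nat.rec 0 (fun _ prev => max (a prev) (b prev) + 1) n with hFdef
  have hF : ∀ n, F (n + 1) = max (a (F n)) (b (F n)) + 1 := fun n => rfl
  refine ⟨fun n => a (F n), fun n => b (F n), strictMono_nat_of_lt_succ fun n => ?_,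
    strictMono_nat_of_lt_succ fun n => ?_, fun n => hP (F n)⟩
  · calc a (F n) < F (n + 1) := by rw [hF]; exact Nat.lt_succ_of_le (le_max_left _ _)
      _ ≤ a (F (n + 1)) := ha _
  · calc b (F n) < F (n + 1) := by rw [hF]; exact Nat.lt_succ_of_le (le_max_right _ _)
      _ ≤ b (F (n + 1)) := hb _

end Aux

theorem stmt0 {X Y : Type*} [NormedAddCommGroup X] [NormedSpace ℝ X] [CompleteSpace X]
    [NormedAddCommGroup Y] [NormedSpace ℝ Y] [CompleteSpace Y]
    (p : ℝ≥0∞) (hp : 1 ≤ p) (T : X →L[ℝ] Y) :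
    List.TFAE
      [∀ K : Set X, DunfordPettisSet K → RelWeaklyPCompact p K →
          IsCompact (closure (T '' K)),
        ∀ x : ℕ → X, PRightNull p x → NormNull (fun n => T (x n)),
        ∀ x : ℕ → X, PRightCauchy p x →
          ∃ y : Y, Tendsto (fun n => T (x n)) atTop (𝓝 y)] := by
  tfae_have 2 → 3 := by
    intro h2 x hx
    obtain ⟨hxc, hxd⟩ := hx
    have hcauchy : CauchySeq fun n => T (x n) := by
      rw [Metric.cauchySeq_iff]
      by_contra hc
      push_neg at hc
      obtain ⟨ε, hε, H⟩ := hc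
      obtain ⟨k, l, hk, hl, hkl⟩ := exists_pair_subseq H
      have hz := hxc k l hk hl
      have hdp := dp_diff ⟨hxd.1, hxd.2⟩ (fun n => Set.mem_range_self (k n))
        (fun n => Set.mem_range_self (l n))
      have hnull := h2 _ ⟨hz, hdp⟩
      rw [NormNull] at hnull
      obtain ⟨n, hn⟩ := (hnull.eventually (gt_mem_nhds hε)).exists
      have : dist (T (x (k n))) (T (x (l n))) < ε := by
        rw [dist_eq_norm, ← map_sub]
        exact hn
      exact absurd this (not_lt.2 (hkl n))
    exact cauchySeq_tendsto_of_complete hcauchy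
  tfae_have 3 → 2 := by
    intro h3 x hx
    obtain ⟨hxs, hxd⟩ := hx
    have hwc : WeaklyPCauchy p x := by
      intro k l hk hl
      by_cases hpi : p = ∞
      · rw [WeaklyPSummable, if_pos hpi] at hxs ⊢
        intro φ
        have h1 := (hxs φ).comp hk.tendsto_atTop
        have h2 := (hxs φ).comp hl.tendsto_atTop
        have := h1.sub h2
        simpa [Function.comp] using this
      · rw [WeaklyPSummable, if_neg hpi] at hxs ⊢
        intro φ
        have hpt : 0 < p.toReal := toReal_pos_of_one_le hp hpi
        have h1 : Memℓp (fun n => φ (x (k n))) p :=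
          (memℓp_gen_iff hpt).2 (((memℓp_gen_iff hpt).1 (hxs φ)).comp_injective hk.injective)
        have h2 : Memℓp (fun n => φ (x (l n))) p :=
          (memℓp_gen_iff hpt).2 (((memℓp_gen_iff hpt).1 (hxs φ)).comp_injective hl.injective)
        have := h1.sub h2
        have heq : ((fun n => φ (x (k n))) - fun n => φ (x (l n)))
            = fun n => φ (x (k n) - x (l n)) := by
          funext n; simp [map_sub]
        rwa [heq] at this
    obtain ⟨y, hy⟩ := h3 x ⟨hwc, hxd⟩
    have hy0 : y = 0 := by
      by_contra h0
      obtain ⟨g, -, hg⟩ := exists_dual_vector ℝ y (norm_ne_zero_iff.2 h0)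
      have h1 : Tendsto (fun n => g (T (x n))) atTop (𝓝 (g y)) :=
        (g.continuous.tendsto y).comp hy
      have h2 : Tendsto (fun n => g (T (x n))) atTop (𝓝 0) :=
        wps_weaklyNull hp hxs (g.comp T)
      have := tendsto_nhds_unique h1 h2
      rw [hg] at this
      exact h0 (norm_eq_zero.1 this)
    rw [hy0] at hy
    exact tendsto_zero_iff_norm_tendsto_zero.1 hy
  tfae_have 2 → 1 := by
    intro h2 K hKdp hKwc
    apply IsSeqCompact.isCompact
    intro y hy
    have hyc : ∀ n : ℕ, ∃ w ∈ T '' K, dist (y n) w < 1 / (n + 1) :=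
      fun n => Metric.mem_closure_iff.1 (hy n) _ (by positivity)
    choose w hw hdist using hyc
    have hw' : ∀ n, ∃ u ∈ K, T u = w n := fun n => hw n
    choose u hu hTu using hw'
    obtain ⟨a, φ, hφ, hsum⟩ := hKwc u hu
    have hdp : DunfordPettisSet (Set.range fun n => u (φ n) - a) :=
      dp_translate hKdp (fun n => hu (φ n)) a
    have hnull := h2 _ ⟨hsum, hdp⟩
    rw [NormNull] at hnull
    have hT : Tendsto (fun n => T (u (φ n))) atTop (𝓝 (T a)) := by
      rw [tendsto_iff_norm_sub_tendsto_zero]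
      refine hnull.congr fun n => ?_
      rw [map_sub]
    have hwT : Tendsto (fun n => w (φ n)) atTop (𝓝 (T a)) := by
      refine hT.congr fun n => hTu (φ n)
    have hyT : Tendsto (fun n => y (φ n)) atTop (𝓝 (T a)) := by
      have hd0 : Tendsto (fun n => dist (w (φ n)) (y (φ n))) atTop (𝓝 0) := by
        have hb : ∀ n : ℕ, dist (w (φ n)) (y (φ n)) ≤ 1 / (n + 1) := by
          intro n
          rw [dist_comm]
          refine le_trans (hdist (φ n)).le ?_
          have hn : (n : ℝ) + 1 ≤ (φ n : ℝ) + 1 := by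
            have := hφ.le_apply (x := n)
            exact_mod_cast Nat.succ_le_succ this
          exact one_div_le_one_div_of_le (by positivity) hn
        exact squeeze_zero (fun n => dist_nonneg) hb tendsto_one_div_add_atTop_nhds_zero_nat
      exact hwT.congr_dist hd0
    refine ⟨T a, ?_, φ, hφ, hyT⟩
    exact mem_closure_of_tendsto hwT (Eventually.of_forall fun n => hw (φ n))
  tfae_have 1 → 2 := by
    intro h1 x hx
    obtain ⟨hxs, hxd⟩ := hx
    have hK : RelWeaklyPCompact p (Set.range x) := by
      intro y hy
      choose g hg using hy
      by_cases hfin : ∃ m, {n | g n = m}.Infinite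
      · obtain ⟨m, hm⟩ := hfin
        obtain ⟨φ, hφ, hφm⟩ := extraction_of_frequently_atTop
          (Nat.frequently_atTop_iff_infinite.2 hm)
        refine ⟨x m, φ, hφ, ?_⟩
        have heq : (fun n => y (φ n) - x m) = fun _ : ℕ => (0 : X) := by
          funext n
          rw [← hg (φ n), hφm n, sub_self]
        rw [heq]
        exact wps_zero p
      · push_neg at hfin
        have hginf : Tendsto g atTop atTop := by
          rw [tendsto_atTop]
          intro b
          have hfin' : {n | g n < b}.Finite := by
            have hsub : {n | g n < b} ⊆ ⋃ m ∈ Finset.range b, {n | g n = m} := by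
              intro n hn
              simp only [Set.mem_iUnion, Finset.mem_range]
              exact ⟨g n, hn, rfl⟩
            exact Set.Finite.subset
              (Set.Finite.biUnion (Finset.range b).finite_toSet
                fun m _ => hfin m) hsub
          have := Set.Finite.eventually_cofinite_notMem hfin'
          rw [Nat.cofinite_eq_atTop] at this
          exact this.mono fun n hn => not_lt.1 hn
        obtain ⟨φ, hφ, hgφ⟩ := exists_strictMono_subseq hginf
        refine ⟨0, φ, hφ, ?_⟩
        have heq : (fun n => y (φ n) - 0) = fun n => x ((g ∘ φ) n) := by
          funext n
          rw [sub_zero, ← hg (φ n)]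
          rfl
        rw [heq]
        exact wps_comp hp hxs hgφ
    have hc := h1 _ hxd hK
    rw [NormNull]
    by_contra hnc
    rw [Metric.tendsto_atTop] at hnc
    push_neg at hnc
    obtain ⟨ε, hε, H⟩ := hnc
    have Hf : ∃ᶠ n in atTop, ε ≤ ‖T (x n)‖ := by
      rw [frequently_atTop]
      intro N
      obtain ⟨n, hn, hd⟩ := H N
      refine ⟨n, hn, ?_⟩
      rwa [Real.dist_0_eq_abs, abs_norm] at hd
    obtain ⟨φ, hφ, hφε⟩ := extraction_of_frequently_atTop Hf
    have hmem : ∀ n, T (x (φ n)) ∈ closure (T '' Set.range x) :=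
      fun n => subset_closure ⟨x (φ n), ⟨φ n, rfl⟩, rfl⟩
    obtain ⟨z, hz, ψ, hψ, hzt⟩ := hc.tendsto_subseq hmem
    have hz0 : z = 0 := by
      by_contra h0
      obtain ⟨g, -, hg⟩ := exists_dual_vector ℝ z (norm_ne_zero_iff.2 h0)
      have h1 : Tendsto (fun n => g (T (x (φ (ψ n))))) atTop (𝓝 (g z)) :=
        (g.continuous.tendsto z).comp hzt
      have h2 : Tendsto (fun n => g (T (x (φ (ψ n))))) atTop (𝓝 0) := by
        have hw := wps_weaklyNull hp hxs (g.comp T)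
        exact hw.comp (hφ.comp hψ).tendsto_atTop
      have := tendsto_nhds_unique h1 h2
      rw [hg] at this
      exact h0 (norm_eq_zero.1 this)
    have hnorm : Tendsto (fun n => ‖T (x (φ (ψ n)))‖) atTop (𝓝 ‖z‖) := hzt.norm
    have hle : ε ≤ ‖z‖ :=
      ge_of_tendsto hnorm (Eventually.of_forall fun n => hφε (ψ n))
    rw [hz0, norm_zero] at hle
    linarith
  tfae_finish
end
end

section
/- A Banach space X has the p-Dunford-Pettis relatively compact property if and only if every p-Right Cauchy sequence in X is norm convergent, if and only if every subset of X that is both a Dunford-Pettis set and weakly p-compact is relatively norm compact. -/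
open Filter Topology Set
open scoped ENNReal

noncomputable section

/-- `K` is weakly `p`-compact: every sequence in `K` has a weakly `p`-convergent
subsequence with limit in `K`. -/
def WeaklyPCompact (p : ℝ≥0∞) {E : Type*} [NormedAddCommGroup E] [NormedSpace ℝ E]
    (K : Set E) : Prop :=
  ∀ x : ℕ → E, (∀ n, x n ∈ K) → ∃ a ∈ K, ∃ φ : ℕ → ℕ, StrictMono φ ∧
    WeaklyPSummable p (fun n => x (φ n) - a)

/-! Everything is reduced to subsequences. For a `p`-Right Cauchy `x` and increasing `k`, `l`,
the sequence `x ∘ k - x ∘ l` is `p`-Right null, so (DPrcP) makes `x` norm Cauchy. If `y ∘ φ`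
converges weakly `p` to `a` inside a Dunford–Pettis set, then `y ∘ φ - a` is `p`-Right null, so a
weakly `p`-compact Dunford–Pettis set is sequentially compact. Conversely a `p`-Right null `x` lies
in the Dunford–Pettis set `insert 0 (range x)`, which is weakly `p`-compact (a sequence in it either
repeats a value infinitely often or has a subsequence reindexing `x` injectively); compactness of
its closure then forces `x → 0`, as a weakly null sequence has no cluster point but `0`. -/

open Pointwise

section lp

variable {α β E : Type*} [NormedAddCommGroup E] {p : ℝ≥0∞} {f : α → E}

theorem Memℓp.comp_injective (hf : Memℓp f p) {m : β → α} (hm : Function.Injective m) :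
    Memℓp (f ∘ m) p := by
  rcases p.trichotomy with rfl | rfl | hp
  · exact memℓp_zero ((memℓp_zero_iff.1 hf).preimage hm.injOn)
  · exact memℓp_infty ((memℓp_infty_iff.1 hf).mono (range_comp_subset_range m (‖f ·‖)))
  · exact memℓp_gen ((hf.summable hp).comp_injective hm)

theorem Memℓp.tendsto_cofinite_zero (hp : p ≠ ∞) (hf : Memℓp f p) :
    Tendsto f cofinite (𝓝 0) := by
  rcases p.trichotomy with rfl | rfl | hp'
  · have h : f =ᶠ[cofinite] 0 := Filter.eventually_cofinite.2 (memℓp_zero_iff.1 hf)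
    exact tendsto_const_nhds.congr' h.symm
  · exact (hp rfl).elim
  · rw [tendsto_zero_iff_norm_tendsto_zero]
    have h := (hf.summable hp').tendsto_cofinite_zero.rpow_const (p := p.toReal⁻¹)
      (Or.inr (by positivity))
    rw [Real.zero_rpow (inv_ne_zero hp'.ne')] at h
    simpa only [Real.rpow_rpow_inv (norm_nonneg _) hp'.ne'] using h

end lp

theorem normNull_iff {E : Type*} [NormedAddCommGroup E] {x : ℕ → E} :
    NormNull x ↔ Tendsto x atTop (𝓝 0) :=
  tendsto_zero_iff_norm_tendsto_zero.symm

section WeaklyPSummable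

variable {E : Type*} [NormedAddCommGroup E] [NormedSpace ℝ E] {p : ℝ≥0∞} {x y : ℕ → E}

theorem WeaklyPSummable.weaklyNull (hx : WeaklyPSummable p x) : WeaklyNull x := by
  unfold WeaklyPSummable at hx
  split_ifs at hx with hp
  · exact hx
  · exact fun φ => Nat.cofinite_eq_atTop ▸ (hx φ).tendsto_cofinite_zero hp

theorem WeaklyPSummable.comp_injective (hx : WeaklyPSummable p x) {m : ℕ → ℕ}
    (hm : Function.Injective m) : WeaklyPSummable p (fun n => x (m n)) := by
  unfold WeaklyPSummable at hx ⊢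
  split_ifs at hx ⊢
  · exact fun φ => (hx φ).comp hm.nat_tendsto_atTop
  · exact fun φ => (hx φ).comp_injective hm

theorem WeaklyPSummable.sub (hx : WeaklyPSummable p x) (hy : WeaklyPSummable p y) :
    WeaklyPSummable p (fun n => x n - y n) := by
  unfold WeaklyPSummable at hx hy ⊢
  split_ifs at hx hy ⊢
  · exact fun φ => by simpa only [map_sub, sub_zero] using (hx φ).sub (hy φ)
  · exact fun φ => by simp only [map_sub]; exact (hx φ).sub (hy φ)

theorem weaklyPSummable_zero : WeaklyPSummable p (fun _ => (0 : E)) := by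
  unfold WeaklyPSummable
  split_ifs
  · exact fun φ => by simpa only [map_zero] using tendsto_const_nhds
  · exact fun φ => by simp only [map_zero]; exact zero_memℓp

theorem WeaklyNull.eq_zero_of_mapClusterPt (hx : WeaklyNull x) {a : E}
    (ha : MapClusterPt a atTop x) : a = 0 :=
  SeparatingDual.eq_zero_of_forall_dual_eq_zero (R := ℝ) fun φ =>
    eq_of_nhds_neBot <|
      NeBot.mono (ha.tendsto_comp (φ.continuous.tendsto a)) (inf_le_inf_left _ (hx φ))

end WeaklyPSummable

section DunfordPettisSet

variable {E : Type*} [NormedAddCommGroup E] [NormedSpace ℝ E] {K L : Set E}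

theorem DunfordPettisSet.subset (hK : DunfordPettisSet K) (h : L ⊆ K) : DunfordPettisSet L :=
  ⟨hK.1.subset h, fun f hf ε hε => (hK.2 f hf ε hε).imp fun _ hN n hn x hx => hN n hn x (h hx)⟩

theorem dunfordPettisSet_singleton (a : E) : DunfordPettisSet {a} := by
  refine ⟨Bornology.isBounded_singleton, fun f hf ε hε => ?_⟩
  obtain ⟨N, hN⟩ := Metric.tendsto_atTop.1 (hf (ContinuousLinearMap.apply ℝ ℝ a)) ε hε
  refine ⟨N, fun n hn x hx => ?_⟩
  rw [mem_singleton_iff.1 hx]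
  simpa [Real.dist_eq] using hN n hn

theorem DunfordPettisSet.union (hK : DunfordPettisSet K) (hL : DunfordPettisSet L) :
    DunfordPettisSet (K ∪ L) := by
  refine ⟨hK.1.union hL.1, fun f hf ε hε => ?_⟩
  obtain ⟨N₁, h₁⟩ := hK.2 f hf ε hε
  obtain ⟨N₂, h₂⟩ := hL.2 f hf ε hε
  refine ⟨max N₁ N₂, fun n hn x hx => ?_⟩
  rcases hx with hx | hx
  · exact h₁ n (le_of_max_le_left hn) x hx
  · exact h₂ n (le_of_max_le_right hn) x hx

theorem DunfordPettisSet.insert (a : E) (hK : DunfordPettisSet K) :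
    DunfordPettisSet (insert a K) :=
  insert_eq a K ▸ (dunfordPettisSet_singleton a).union hK

theorem DunfordPettisSet.sub (hK : DunfordPettisSet K) (hL : DunfordPettisSet L) :
    DunfordPettisSet (K - L) := by
  refine ⟨hK.1.sub hL.1, fun f hf ε hε => ?_⟩
  obtain ⟨N₁, h₁⟩ := hK.2 f hf (ε / 2) (half_pos hε)
  obtain ⟨N₂, h₂⟩ := hL.2 f hf (ε / 2) (half_pos hε)
  refine ⟨max N₁ N₂, fun n hn _ ⟨a, ha, b, hb, hab⟩ => hab ▸ ?_⟩
  calc |f n (a - b)| = |f n a - f n b| := by rw [map_sub]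
    _ ≤ |f n a| + |f n b| := abs_sub _ _
    _ < ε / 2 + ε / 2 :=
        add_lt_add (h₁ n (le_of_max_le_left hn) a ha) (h₂ n (le_of_max_le_right hn) b hb)
    _ = ε := add_halves ε

end DunfordPettisSet

theorem exists_strictMono_comp_strictMono_comp_strictMono {u v : ℕ → ℕ}
    (hu : Tendsto u atTop atTop) (hv : Tendsto v atTop atTop) :
    ∃ φ : ℕ → ℕ, StrictMono φ ∧ StrictMono (u ∘ φ) ∧ StrictMono (v ∘ φ) := by
  obtain ⟨φ, hφ, huφ⟩ := strictMono_subseq_of_tendsto_atTop hu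
  obtain ⟨ψ, hψ, hvψ⟩ := strictMono_subseq_of_tendsto_atTop (hv.comp hφ.tendsto_atTop)
  exact ⟨φ ∘ ψ, hφ.comp hψ, huφ.comp hψ, hvψ⟩

theorem exists_strictMono_subseq_eq_comp_strictMono {α : Type*} {x y : ℕ → α}
    (hy : ∀ n, y n ∈ range x) (hfin : ∀ c, {n | y n = c}.Finite) :
    ∃ φ m : ℕ → ℕ, StrictMono φ ∧ StrictMono m ∧ ∀ n, y (φ n) = x (m n) := by
  choose j hj using hy
  have hj_fibres : ∀ c, Finite (j ⁻¹' {c}) := fun c =>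
    (hfin (x c)).subset fun n hn => (hj n).symm.trans (congrArg x hn)
  have hj_tendsto : Tendsto j atTop atTop :=
    Nat.cofinite_eq_atTop ▸ Tendsto.cofinite_of_finite_preimage_singleton hj_fibres
  obtain ⟨φ, hφ, hjφ⟩ := strictMono_subseq_of_tendsto_atTop hj_tendsto
  exact ⟨φ, j ∘ φ, hφ, hjφ, fun n => (hj (φ n)).symm⟩

section PSequences

variable {E : Type*} [NormedAddCommGroup E] [NormedSpace ℝ E] {p : ℝ≥0∞} {x : ℕ → E}

theorem PRightNull.pRightCauchy (hx : PRightNull p x) : PRightCauchy p x :=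
  ⟨fun _ _ hk hl => (hx.1.comp_injective hk.injective).sub (hx.1.comp_injective hl.injective),
    hx.2⟩

theorem PRightCauchy.pRightNull_sub (hx : PRightCauchy p x) {k l : ℕ → ℕ} (hk : StrictMono k)
    (hl : StrictMono l) : PRightNull p (fun n => x (k n) - x (l n)) :=
  ⟨hx.1 k l hk hl, (hx.2.sub hx.2).subset <| range_subset_iff.2 fun n =>
    Set.sub_mem_sub (mem_range_self (k n)) (mem_range_self (l n))⟩

theorem weaklyPCompact_insert_zero_range (hx : WeaklyPSummable p x) :
    WeaklyPCompact p (insert 0 (range x)) := by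
  intro y hy
  by_cases hfin : ∀ c, {n | y n = c}.Finite
  · obtain ⟨φ, hφ, hφ0⟩ := extraction_of_eventually_atTop
      (Nat.cofinite_eq_atTop ▸ (hfin 0).eventually_cofinite_notMem)
    have hyφ : ∀ n, y (φ n) ∈ range x := fun n => (hy (φ n)).resolve_left (hφ0 n)
    have hfinφ : ∀ c, {n | y (φ n) = c}.Finite := fun c =>
      (hfin c).preimage hφ.injective.injOn
    obtain ⟨ψ, m, hψ, hm, hxm⟩ := exists_strictMono_subseq_eq_comp_strictMono hyφ hfinφ
    refine ⟨0, mem_insert 0 _, φ ∘ ψ, hφ.comp hψ, ?_⟩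
    simpa only [Function.comp_apply, hxm, sub_zero] using hx.comp_injective hm.injective
  · obtain ⟨c, hc⟩ := not_forall.1 hfin
    obtain ⟨φ, hφ, hyφ⟩ := extraction_of_frequently_atTop (Nat.frequently_atTop_iff_infinite.2 hc)
    refine ⟨c, hyφ 0 ▸ hy (φ 0), φ, hφ, ?_⟩
    simpa only [hyφ, sub_self] using weaklyPSummable_zero

end PSequences

namespace HasDPrcP

variable {X : Type*} [NormedAddCommGroup X] [NormedSpace ℝ X] {p : ℝ≥0∞}

theorem cauchySeq (H : HasDPrcP p X) {x : ℕ → X} (hx : PRightCauchy p x) : CauchySeq x := by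
  rw [cauchySeq_iff_tendsto_dist_atTop_0]
  refine tendsto_of_subseq_tendsto fun ns hns => ?_
  rw [← prod_atTop_atTop_eq] at hns
  obtain ⟨φ, -, hk, hl⟩ := exists_strictMono_comp_strictMono_comp_strictMono
    (tendsto_fst.comp hns) (tendsto_snd.comp hns)
  have h := H _ (hx.pRightNull_sub hk hl)
  rw [NormNull] at h
  exact ⟨φ, by simpa only [dist_eq_norm, Function.comp_apply] using h⟩

theorem of_forall_pRightCauchy_tendsto
    (H : ∀ x : ℕ → X, PRightCauchy p x → ∃ a : X, Tendsto x atTop (𝓝 a)) : HasDPrcP p X := by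
  intro x hx
  obtain ⟨a, ha⟩ := H x hx.pRightCauchy
  obtain rfl := hx.1.weaklyNull.eq_zero_of_mapClusterPt ha.mapClusterPt
  exact normNull_iff.2 ha

theorem isSeqCompact (H : HasDPrcP p X) {K : Set X} (hK : DunfordPettisSet K)
    (hKp : WeaklyPCompact p K) : IsSeqCompact K := by
  intro y hy
  obtain ⟨a, ha, φ, hφ, hyφ⟩ := hKp y hy
  have hdp : DunfordPettisSet (range fun n => y (φ n) - a) :=
    (hK.sub (dunfordPettisSet_singleton a)).subset <| range_subset_iff.2 fun n =>
      Set.sub_mem_sub (hy (φ n)) rfl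
  refine ⟨a, ha, φ, hφ, ?_⟩
  simpa only [Function.comp_def, sub_add_cancel, zero_add] using
    (normNull_iff.1 (H _ ⟨hyφ, hdp⟩)).add_const a

theorem of_forall_isCompact_closure
    (H : ∀ K : Set X, DunfordPettisSet K → WeaklyPCompact p K → IsCompact (closure K)) :
    HasDPrcP p X := by
  intro x hx
  have hK := H _ (hx.2.insert 0) (weaklyPCompact_insert_zero_range hx.1)
  refine normNull_iff.2 (hK.tendsto_nhds_of_unique_mapClusterPt ?_ ?_)
  · exact Eventually.of_forall fun n => subset_closure (mem_insert_of_mem 0 (mem_range_self n))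
  · exact fun a _ ha => hx.1.weaklyNull.eq_zero_of_mapClusterPt ha

end HasDPrcP

theorem stmt1_general {X : Type*} [NormedAddCommGroup X] [NormedSpace ℝ X] [CompleteSpace X]
    (p : ℝ≥0∞) :
    (HasDPrcP p X ↔
      ∀ x : ℕ → X, PRightCauchy p x → ∃ a : X, Tendsto (fun n => x n) atTop (𝓝 a)) ∧
    (HasDPrcP p X ↔
      ∀ K : Set X, DunfordPettisSet K → WeaklyPCompact p K → IsCompact (closure K)) := by
  refine ⟨⟨fun H x hx => cauchySeq_tendsto_of_complete (H.cauchySeq hx),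
    HasDPrcP.of_forall_pRightCauchy_tendsto⟩, ⟨fun H K hK hKp => ?_,
    HasDPrcP.of_forall_isCompact_closure⟩⟩
  have hKc := (H.isSeqCompact hK hKp).isCompact
  rwa [hKc.isClosed.closure_eq]

theorem stmt1 {X : Type*} [NormedAddCommGroup X] [NormedSpace ℝ X] [CompleteSpace X]
    (p : ℝ≥0∞) (hp : 1 ≤ p) :
    (HasDPrcP p X ↔
      ∀ x : ℕ → X, PRightCauchy p x → ∃ a : X, Tendsto (fun n => x n) atTop (𝓝 a)) ∧
    (HasDPrcP p X ↔
      ∀ K : Set X, DunfordPettisSet K → WeaklyPCompact p K → IsCompact (closure K)) :=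
  stmt1_general p
end
end

section
/- The Banach space c₀ does not have the p-Dunford-Pettis relatively compact property for any 1 ≤ p ≤ ∞; indeed the sequence of unit coordinate vectors (e_n) in c₀ is weakly p-summable, forms a Dunford-Pettis set, and has norm 1 for all n. -/
open Filter Topology Set
open scoped ENNReal

noncomputable section

/-!
For `φ ∈ c₀*` the sequence `(φ eₖ)` lies in `ℓ¹`, with norm at most `‖φ‖` (evaluate `φ` on finite
sign combinations of the `eₖ`); this gives weak `p`-summability of `(eₙ)` for every `p ≥ 1`.

For the Dunford–Pettis property, a weakly null sequence `(fₙ)` in `c₀*` yields rows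
`aₙ = (fₙ eₖ)ₖ ∈ ℓ¹` that are weakly null against `ℓ^∞`, since every bounded `s` defines the
functional `φ ↦ ∑ sₖ φ(eₖ)` on `c₀*`. A gliding hump shows that such rows tend to `0` uniformly:
otherwise one extracts rows that carry an entry of size `≥ ε` in pairwise disjoint windows and have
mass `< ε/2` outside their window; the signs of these entries form an `s` with
`∑ sₖ aₙ(k) ≥ ε/2` along the extracted rows.
-/

section GlidingHump

lemma tsum_indicator_compl_Ico_eq {g : ℕ → ℝ} (hg : Summable g) {c c' : ℕ} (h : c ≤ c') :
    ∑' k, (↑(Finset.Ico c c') : Set ℕ)ᶜ.indicator g k =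
      ∑ k ∈ Finset.range c, g k + (∑' k, g k - ∑ k ∈ Finset.range c', g k) := by
  rw [← _root_.tsum_subtype, ← hg.sum_add_tsum_compl (s := Finset.Ico c c'),
    Finset.sum_Ico_eq_sub _ h]
  ring

lemma sub_tsum_indicator_compl_le_tsum_mul {b s : ℕ → ℝ} (hb : Summable fun k => |b k|)
    (hs : ∀ k, |s k| ≤ 1) {W : Finset ℕ} {m : ℕ} (hm : m ∈ W) (hsW : ∀ k ∈ W, k ≠ m → s k = 0)
    (hsm : s m * b m = |b m|) :
    |b m| - ∑' k, (↑W : Set ℕ)ᶜ.indicator (fun k => |b k|) k ≤ ∑' k, s k * b k := by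
  have hbound : ∀ k, ‖(↑W : Set ℕ)ᶜ.indicator (fun k => s k * b k) k‖ ≤
      (↑W : Set ℕ)ᶜ.indicator (fun k => |b k|) k := fun k => by
    by_cases hk : k ∈ (↑W : Set ℕ)ᶜ
    · simpa [indicator_of_mem hk, abs_mul] using mul_le_of_le_one_left (abs_nonneg _) (hs k)
    · simp [indicator_of_notMem hk]
  have hsb : Summable fun k => s k * b k :=
    hb.of_norm_bounded fun k => by
      simpa [abs_mul] using mul_le_of_le_one_left (abs_nonneg _) (hs k)
  have hmass : Summable fun k => (↑W : Set ℕ)ᶜ.indicator (fun k => |b k|) k :=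
    hb.indicator _
  rw [← hsb.sum_add_tsum_compl (s := W), _root_.tsum_subtype _ fun k => s k * b k,
    Finset.sum_eq_single m (fun k hk hkm => by rw [hsW k hk hkm, zero_mul]) (absurd hm), hsm]
  have herr := tsum_of_norm_bounded hmass.hasSum hbound
  rw [Real.norm_eq_abs] at herr
  linarith [neg_abs_le (∑' k, (↑W : Set ℕ)ᶜ.indicator (fun k => s k * b k) k)]

lemma eq_of_mem_Ico_of_strictMono {cut : ℕ → ℕ} (hcut : StrictMono cut) {i j x : ℕ}
    (hi : x ∈ Finset.Ico (cut i) (cut (i + 1))) (hj : x ∈ Finset.Ico (cut j) (cut (j + 1))) :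
    i = j := by
  rw [Finset.mem_Ico] at hi hj
  rcases lt_trichotomy i j with hij | hij | hij
  · have := hcut.monotone (show i + 1 ≤ j by omega)
    omega
  · exact hij
  · have := hcut.monotone (show j + 1 ≤ i by omega)
    omega

variable {a : ℕ → ℕ → ℝ} {ε : ℝ}

lemma exists_hump_in_Ico (ha : ∀ n, Summable fun k => |a n k|)
    (hpt : ∀ k, Tendsto (fun n => a n k) atTop (𝓝 0)) (hε : 0 < ε)
    (hbad : ∃ᶠ n in atTop, ∃ k, ε ≤ |a n k|) (N c : ℕ) :
    ∃ n ≥ N, ∃ k c', c ≤ k ∧ k < c' ∧ ε ≤ |a n k| ∧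
      ∑' j, (↑(Finset.Ico c c') : Set ℕ)ᶜ.indicator (fun j => |a n j|) j < ε / 2 := by
  have hhead : ∀ᶠ n in atTop, ∑ j ∈ Finset.range c, |a n j| < ε / 4 := by
    have : Tendsto (fun n => ∑ j ∈ Finset.range c, |a n j|) atTop (𝓝 0) := by
      simpa using tendsto_finsetSum (Finset.range c) fun j _ => (hpt j).abs
    exact this.eventually_lt_const (by positivity)
  obtain ⟨n, ⟨hnN, hn⟩, k, hk⟩ := (((eventually_ge_atTop N).and hhead).and_frequently hbad).exists
  have hck : c ≤ k := by
    by_contra! hkc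
    have := Finset.single_le_sum (fun j _ => abs_nonneg (a n j)) (Finset.mem_range.2 hkc)
    linarith
  have htail : ∀ᶠ c' in atTop, ∑' j, |a n j| - ∑ j ∈ Finset.range c', |a n j| < ε / 4 := by
    have := (tendsto_const_nhds (x := ∑' j, |a n j|)).sub (ha n).hasSum.tendsto_sum_nat
    rw [sub_self] at this
    exact this.eventually_lt_const (by positivity)
  obtain ⟨c', hkc', hc'⟩ := ((eventually_gt_atTop k).and htail).exists
  refine ⟨n, hnN, k, c', hck, hkc', hk, ?_⟩
  rw [tsum_indicator_compl_Ico_eq (ha n) (hck.trans hkc'.le)]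
  linarith

lemma exists_gliding_hump (ha : ∀ n, Summable fun k => |a n k|)
    (hpt : ∀ k, Tendsto (fun n => a n k) atTop (𝓝 0)) (hε : 0 < ε)
    (hbad : ∃ᶠ n in atTop, ∃ k, ε ≤ |a n k|) :
    ∃ ν μ cut : ℕ → ℕ, Tendsto ν atTop atTop ∧ StrictMono cut ∧ ∀ i,
      μ i ∈ Finset.Ico (cut i) (cut (i + 1)) ∧ ε ≤ |a (ν i) (μ i)| ∧
      ∑' j, (↑(Finset.Ico (cut i) (cut (i + 1))) : Set ℕ)ᶜ.indicator (fun j => |a (ν i) j|) j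
        < ε / 2 := by
  choose n hnN k c' hck hkc' hk hmass using exists_hump_in_Ico ha hpt hε hbad
  let cut : ℕ → ℕ := fun i => Nat.rec 0 c' i
  exact ⟨fun i => n i (cut i), fun i => k i (cut i), cut,
    tendsto_atTop_mono (fun i => hnN i (cut i)) tendsto_id,
    strictMono_nat_of_lt_succ fun i => (hck i (cut i)).trans_lt (hkc' i (cut i)),
    fun i => ⟨Finset.mem_Ico.2 ⟨hck i (cut i), hkc' i (cut i)⟩, hk i (cut i), hmass i (cut i)⟩⟩

lemma abs_sign_le_one (x : ℝ) : |(SignType.sign x : ℝ)| ≤ 1 := by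
  cases SignType.sign x <;> simp

theorem tendstoUniformly_zero_of_tendsto_tsum_mul (ha : ∀ n, Summable fun k => |a n k|)
    (h : ∀ s : ℕ → ℝ, (∀ k, |s k| ≤ 1) → Tendsto (fun n => ∑' k, s k * a n k) atTop (𝓝 0)) :
    TendstoUniformly a 0 atTop := by
  have hpt : ∀ k, Tendsto (fun n => a n k) atTop (𝓝 0) := fun k => by
    simpa [ite_mul] using h (fun j => if j = k then 1 else 0) fun j => by split_ifs <;> simp
  rw [Metric.tendstoUniformly_iff]
  intro ε hε
  by_contra hbad
  have hbad' : ∃ᶠ n in atTop, ∃ k, ε ≤ |a n k| := by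
    simpa [not_eventually, Real.dist_eq, frequently_atTop] using hbad
  obtain ⟨ν, μ, cut, hν, hcut, hμ⟩ := exists_gliding_hump ha hpt hε hbad'
  choose hμW hbig hmass using hμ
  have hμinj : Function.Injective μ := fun i j hij =>
    eq_of_mem_Ico_of_strictMono hcut (hμW i) (hij ▸ hμW j)
  let s := Function.extend μ (fun i => (SignType.sign (a (ν i) (μ i)) : ℝ)) 0
  have hsμ : ∀ i, s (μ i) = SignType.sign (a (ν i) (μ i)) := hμinj.extend_apply _ _
  have hs0 : ∀ k, (¬∃ i, μ i = k) → s k = 0 := fun k hk => Function.extend_apply' _ _ _ hk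
  have hs : ∀ k, |s k| ≤ 1 := by
    intro k
    by_cases hk : ∃ i, μ i = k
    · obtain ⟨i, rfl⟩ := hk
      rw [hsμ]
      exact abs_sign_le_one _
    · simp [hs0 k hk]
  have hlower : ∀ i, ε / 2 ≤ ∑' k, s k * a (ν i) k := fun i => by
    have := sub_tsum_indicator_compl_le_tsum_mul (ha (ν i)) hs (hμW i) (fun k hk hki => by
      by_cases hk' : ∃ j, μ j = k
      · obtain ⟨j, rfl⟩ := hk'
        exact absurd (congrArg μ (eq_of_mem_Ico_of_strictMono hcut (hμW j) hk)) hki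
      · exact hs0 k hk')
      (by rw [hsμ]; exact sign_mul_self _)
    linarith [hbig i, hmass i]
  obtain ⟨i, hi⟩ := (((h s hs).comp hν).eventually_lt_const (half_pos hε)).exists
  exact (hlower i).not_gt hi

end GlidingHump

open scoped ZeroAtInfty

lemma ZeroAtInftyContinuousMap.norm_le_iff {α β : Type*} [TopologicalSpace α]
    [SeminormedAddCommGroup β] {f : C₀(α, β)} {C : ℝ} (hC : 0 ≤ C) :
    ‖f‖ ≤ C ↔ ∀ x, ‖f x‖ ≤ C := by
  rw [← norm_toBCF_eq_norm, BoundedContinuousFunction.norm_le hC]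
  rfl

def unitVec (n : ℕ) : C₀(ℕ, ℝ) where
  toFun m := if m = n then 1 else 0
  continuous_toFun := continuous_of_discreteTopology
  zero_at_infty' := by
    rw [cocompact_eq_cofinite]
    exact tendsto_const_nhds.congr' ((eventually_cofinite_ne n).mono fun m hm => (if_neg hm).symm)

lemma unitVec_apply (n m : ℕ) : unitVec n m = if m = n then 1 else 0 := rfl

lemma norm_unitVec (n : ℕ) : ‖unitVec n‖ = 1 := by
  refine le_antisymm ((ZeroAtInftyContinuousMap.norm_le_iff zero_le_one).2 fun m => ?_) ?_
  · rw [unitVec_apply]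
    split_ifs <;> simp
  · simpa [unitVec_apply] using
      (ZeroAtInftyContinuousMap.norm_le_iff (norm_nonneg (unitVec n))).1 le_rfl n

lemma sum_smul_unitVec_apply (c : ℕ → ℝ) (S : Finset ℕ) (m : ℕ) :
    (∑ k ∈ S, c k • unitVec k) m = if m ∈ S then c m else 0 := by
  change AddMonoidHom.mk' (fun f : C₀(ℕ, ℝ) => f m) (fun _ _ => rfl) _ = _
  simp [map_sum, unitVec_apply]

lemma norm_sum_smul_unitVec_le {c : ℕ → ℝ} (hc : ∀ k, |c k| ≤ 1) (S : Finset ℕ) :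
    ‖∑ k ∈ S, c k • unitVec k‖ ≤ 1 := by
  refine (ZeroAtInftyContinuousMap.norm_le_iff zero_le_one).2 fun m => ?_
  rw [sum_smul_unitVec_apply]
  split_ifs
  · exact hc m
  · simp

lemma sum_abs_apply_unitVec_le (φ : C₀(ℕ, ℝ) →L[ℝ] ℝ) (S : Finset ℕ) :
    ∑ k ∈ S, |φ (unitVec k)| ≤ ‖φ‖ :=
  calc ∑ k ∈ S, |φ (unitVec k)|
      = φ (∑ k ∈ S, (SignType.sign (φ (unitVec k)) : ℝ) • unitVec k) := by
        simp [map_sum, sign_mul_self]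
    _ ≤ ‖φ‖ * ‖∑ k ∈ S, (SignType.sign (φ (unitVec k)) : ℝ) • unitVec k‖ :=
        (le_abs_self _).trans (φ.le_opNorm _)
    _ ≤ ‖φ‖ := mul_le_of_le_one_right (norm_nonneg φ)
        (norm_sum_smul_unitVec_le (fun k => abs_sign_le_one _) S)

lemma summable_abs_apply_unitVec (φ : C₀(ℕ, ℝ) →L[ℝ] ℝ) :
    Summable fun k => |φ (unitVec k)| :=
  summable_of_sum_range_le (fun _ => abs_nonneg _) fun _ => sum_abs_apply_unitVec_le φ _

lemma tsum_abs_apply_unitVec_le (φ : C₀(ℕ, ℝ) →L[ℝ] ℝ) :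
    ∑' k, |φ (unitVec k)| ≤ ‖φ‖ :=
  (summable_abs_apply_unitVec φ).tsum_le_of_sum_range_le fun _ => sum_abs_apply_unitVec_le φ _

lemma summable_mul_apply_unitVec {s : ℕ → ℝ} (hs : ∀ k, |s k| ≤ 1) (φ : C₀(ℕ, ℝ) →L[ℝ] ℝ) :
    Summable fun k => s k * φ (unitVec k) :=
  (summable_abs_apply_unitVec φ).of_norm_bounded fun k => by
    simpa [abs_mul] using mul_le_of_le_one_left (abs_nonneg _) (hs k)

lemma WeaklyNull.tendsto_tsum_mul_apply_unitVec {f : ℕ → C₀(ℕ, ℝ) →L[ℝ] ℝ} (hf : WeaklyNull f)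
    {s : ℕ → ℝ} (hs : ∀ k, |s k| ≤ 1) :
    Tendsto (fun n => ∑' k, s k * f n (unitVec k)) atTop (𝓝 0) := by
  let Φ : (C₀(ℕ, ℝ) →L[ℝ] ℝ) →L[ℝ] ℝ := LinearMap.mkContinuous
    { toFun := fun φ : C₀(ℕ, ℝ) →L[ℝ] ℝ => ∑' k, s k * φ (unitVec k)
      map_add' := fun φ ψ => by
        simp only [add_apply, mul_add]
        exact (summable_mul_apply_unitVec hs φ).tsum_add (summable_mul_apply_unitVec hs ψ)
      map_smul' := fun c φ => by
        simp only [smul_apply, smul_eq_mul, RingHom.id_apply,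
          ← tsum_mul_left, mul_left_comm] }
    1 fun φ => by
      rw [one_mul]
      refine (tsum_of_norm_bounded (summable_abs_apply_unitVec φ).hasSum fun k => ?_).trans
        (tsum_abs_apply_unitVec_le φ)
      simpa [abs_mul] using mul_le_of_le_one_left (abs_nonneg _) (hs k)
  exact hf Φ

theorem dunfordPettisSet_range_unitVec : DunfordPettisSet (Set.range unitVec) := by
  refine ⟨isBounded_iff_forall_norm_le.2 ⟨1, ?_⟩, fun f hf ε hε => ?_⟩
  · rintro _ ⟨n, rfl⟩
    exact (norm_unitVec n).le
  have := tendstoUniformly_zero_of_tendsto_tsum_mul (a := fun n k => f n (unitVec k))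
    (fun n => summable_abs_apply_unitVec (f n)) fun _ hs => hf.tendsto_tsum_mul_apply_unitVec hs
  obtain ⟨N, hN⟩ := eventually_atTop.1 (Metric.tendstoUniformly_iff.1 this ε hε)
  refine ⟨N, fun n hn _ ⟨k, hk⟩ => hk ▸ ?_⟩
  simpa [Real.dist_eq] using hN n hn k

theorem weaklyPSummable_unitVec {p : ℝ≥0∞} (hp : 1 ≤ p) : WeaklyPSummable p unitVec := by
  unfold WeaklyPSummable
  split_ifs
  · exact fun φ => (tendsto_zero_iff_abs_tendsto_zero _).2
      (summable_abs_apply_unitVec φ).tendsto_atTop_zero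
  · refine fun φ => Memℓp.of_exponent_ge (memℓp_gen ?_) hp
    simpa using summable_abs_apply_unitVec φ

open scoped ZeroAtInfty in
theorem stmt4 (p : ℝ≥0∞) (hp : 1 ≤ p) :
    ¬ HasDPrcP p C₀(ℕ, ℝ) ∧
      ∀ e : ℕ → C₀(ℕ, ℝ), (∀ n m : ℕ, e n m = if m = n then 1 else 0) →
        WeaklyPSummable p e ∧ DunfordPettisSet (Set.range e) ∧ ∀ n, ‖e n‖ = 1 := by
  have hunitVec : WeaklyPSummable p unitVec ∧ DunfordPettisSet (Set.range unitVec) ∧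
      ∀ n, ‖unitVec n‖ = 1 :=
    ⟨weaklyPSummable_unitVec hp, dunfordPettisSet_range_unitVec, norm_unitVec⟩
  refine ⟨fun h => ?_, fun e he => ?_⟩
  · have hnull : NormNull unitVec := h unitVec ⟨hunitVec.1, hunitVec.2.1⟩
    simp only [NormNull, norm_unitVec] at hnull
    exact one_ne_zero (tendsto_nhds_unique tendsto_const_nhds hnull)
  · obtain rfl : e = unitVec := funext fun n => ZeroAtInftyContinuousMap.ext (he n)
    exact hunitVec
end
end

section
/- A Banach space X has the p-Dunford-Pettis relatively compact property if and only if for every Banach space Y, every bounded linear operator from X to Y is Dunford-Pettis p-convergent, if and only if X is the direct sum of two closed subspaces each having the p-Dunford-Pettis relatively compact property. -/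
open Filter Topology Set
open scoped ENNReal

noncomputable section

/-! Bounded operators map Dunford-Pettis `p`-right null sequences to such sequences (adjoints
keep sequences of functionals weakly null), which gives the forward implications and, through
the continuous projections of a topological direct sum, the passage from two summands to the
whole space. Conversely, norming functionals `φ n` for `x n` assemble into one operator
`X → ℓ∞` with `‖x n‖ ≤ ‖T (x n)‖`, so Dunford-Pettis `p`-convergence of that single operator
already forces `‖x n‖ → 0`. -/

open scoped BoundedContinuousFunction

theorem NormNull.add {E : Type*} [NormedAddCommGroup E] {x y : ℕ → E} (hx : NormNull x)
    (hy : NormNull y) : NormNull (x + y) :=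
  squeeze_zero (fun _ => norm_nonneg _) (fun n => norm_add_le (x n) (y n))
    (by simpa using Tendsto.add hx hy)

section

variable {E F : Type*} [NormedAddCommGroup E] [NormedSpace ℝ E]
  [NormedAddCommGroup F] [NormedSpace ℝ F]

theorem NormNull.map (T : E →L[ℝ] F) {x : ℕ → E} (hx : NormNull x) :
    NormNull (fun n => T (x n)) :=
  squeeze_zero (fun _ => norm_nonneg _) (fun n => T.le_opNorm (x n))
    (by simpa using hx.const_mul ‖T‖)

theorem WeaklyPSummable.map {p : ℝ≥0∞} (T : E →L[ℝ] F) {x : ℕ → E}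
    (hx : WeaklyPSummable p x) : WeaklyPSummable p (fun n => T (x n)) := by
  unfold WeaklyPSummable WeaklyNull at hx ⊢
  split_ifs at hx ⊢ <;> exact fun φ => hx (φ.comp T)

theorem DunfordPettisSet.image (T : E →L[ℝ] F) {K : Set E} (hK : DunfordPettisSet K) :
    DunfordPettisSet (T '' K) := by
  obtain ⟨hbdd, hunif⟩ := hK
  refine ⟨T.lipschitz.isBounded_image hbdd, fun f hf ε hε => ?_⟩
  have hfT : WeaklyNull (fun n => (f n).comp T) := fun Φ => by
    simpa [opAdjoint] using hf (Φ.comp (opAdjoint T))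
  obtain ⟨N, hN⟩ := hunif _ hfT ε hε
  exact ⟨N, fun n hn _ ⟨x, hx, hTx⟩ => hTx ▸ hN n hn x hx⟩

theorem PRightNull.map {p : ℝ≥0∞} (T : E →L[ℝ] F) {x : ℕ → E} (hx : PRightNull p x) :
    PRightNull p (fun n => T (x n)) :=
  ⟨hx.1.map T, Set.range_comp T x ▸ hx.2.image T⟩

theorem HasDPrcP.dpPConvergent {p : ℝ≥0∞} (hE : HasDPrcP p E) (T : E →L[ℝ] F) :
    DPpConvergent p T :=
  fun x hx => (hE x hx).map T

theorem HasDPrcP.submodule {p : ℝ≥0∞} (hE : HasDPrcP p E) (Y : Submodule ℝ E) :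
    HasDPrcP p Y :=
  fun _ hx => hE _ (hx.map Y.subtypeL)

theorem hasDPrcP_of_subsingleton (p : ℝ≥0∞) [Subsingleton E] : HasDPrcP p E :=
  fun _ _ => by simp [NormNull, Subsingleton.elim _ (0 : E)]

theorem HasDPrcP.of_isTopCompl {p : ℝ≥0∞} {Y Z : Submodule ℝ E} (h : Y.IsTopCompl Z)
    (hY : HasDPrcP p Y) (hZ : HasDPrcP p Z) : HasDPrcP p E := by
  intro x hx
  have hP := (hY _ (hx.map (Y.projectionOntoL Z h))).map Y.subtypeL
  have hQ := (hZ _ (hx.map (Z.projectionOntoL Y h.symm))).map Z.subtypeL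
  convert hP.add hQ using 1
  funext n
  exact (Submodule.projectionL_add_projectionL_eq_self h (x n)).symm

theorem exists_continuousLinearMap_boundedContinuousFunction_norm_le (x : ℕ → E) :
    ∃ T : E →L[ℝ] (ℕ →ᵇ ℝ), ∀ n, ‖x n‖ ≤ ‖T (x n)‖ := by
  choose φ hφ_norm hφ_apply using fun n => exists_dual_vector'' ℝ (x n)
  have hbound : ∀ z n, ‖φ n z‖ ≤ ‖z‖ := fun z n =>
    ((φ n).le_opNorm z).trans (mul_le_of_le_one_left (norm_nonneg z) (hφ_norm n))
  let T : E →ₗ[ℝ] (ℕ →ᵇ ℝ) :=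
    { toFun := fun z => .ofNormedAddCommGroupDiscrete (fun n => φ n z) ‖z‖ (hbound z)
      map_add' := fun z w => by ext n; simp
      map_smul' := fun c z => by ext n; simp }
  refine ⟨T.mkContinuous 1 fun z => ?_, fun n => ?_⟩
  · rw [one_mul]
    exact BoundedContinuousFunction.norm_ofNormedAddCommGroup_le _ (norm_nonneg z) (hbound z)
  · calc ‖x n‖ = ‖T (x n) n‖ := by simp [T, hφ_apply]
      _ ≤ ‖T (x n)‖ := BoundedContinuousFunction.norm_coe_le_norm _ n

theorem hasDPrcP_of_forall_dpPConvergent {p : ℝ≥0∞}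
    (h : ∀ T : E →L[ℝ] (ℕ →ᵇ ℝ), DPpConvergent p T) : HasDPrcP p E := by
  intro x hx
  obtain ⟨T, hT⟩ := exists_continuousLinearMap_boundedContinuousFunction_norm_le x
  exact squeeze_zero (fun _ => norm_nonneg _) hT (h T x hx)

end

theorem stmt5_general {X : Type*} [NormedAddCommGroup X] [NormedSpace ℝ X] [CompleteSpace X]
    (p : ℝ≥0∞) :
    (HasDPrcP p X ↔
      ∀ (Y : Type) (_ : NormedAddCommGroup Y) (_ : NormedSpace ℝ Y) (_ : CompleteSpace Y)
        (T : X →L[ℝ] Y), DPpConvergent p T) ∧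
    (HasDPrcP p X ↔
      ∃ Y Z : Submodule ℝ X, IsClosed (Y : Set X) ∧ IsClosed (Z : Set X) ∧
        IsCompl Y Z ∧ HasDPrcP p Y ∧ HasDPrcP p Z) := by
  refine ⟨⟨fun hX Y _ _ _ T => hX.dpPConvergent T,
    fun h => hasDPrcP_of_forall_dpPConvergent (h _ _ _ inferInstance)⟩, ⟨fun hX => ?_, ?_⟩⟩
  · exact ⟨⊤, ⊥, by simp, by simp, isCompl_top_bot, hX.submodule ⊤, hasDPrcP_of_subsingleton p⟩
  · rintro ⟨Y, Z, hY, hZ, hYZ, hpY, hpZ⟩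
    exact .of_isTopCompl (Submodule.IsCompl.isTopCompl_of_isClosed hYZ hY hZ) hpY hpZ

theorem stmt5 {X : Type*} [NormedAddCommGroup X] [NormedSpace ℝ X] [CompleteSpace X]
    (p : ℝ≥0∞) (hp : 1 ≤ p) :
    (HasDPrcP p X ↔
      ∀ (Y : Type) (_ : NormedAddCommGroup Y) (_ : NormedSpace ℝ Y) (_ : CompleteSpace Y)
        (T : X →L[ℝ] Y), DPpConvergent p T) ∧
    (HasDPrcP p X ↔
      ∃ Y Z : Submodule ℝ X, IsClosed (Y : Set X) ∧ IsClosed (Z : Set X) ∧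
        IsCompl Y Z ∧ HasDPrcP p Y ∧ HasDPrcP p Z) :=
  stmt5_general p
end
end

section
/- Let (X_n) be a sequence of Banach spaces. Then each X_n has the p-Dunford-Pettis relatively compact property if and only if the ℓ₁-direct sum (Σ_n ⊕ X_n)_{ℓ₁} has the p-Dunford-Pettis relatively compact property. -/
open Filter Topology Set
open scoped ENNReal

noncomputable section

section Aux

variable {E F : Type*} [NormedAddCommGroup E] [NormedSpace ℝ E]
  [NormedAddCommGroup F] [NormedSpace ℝ F]

lemma weaklyNull_comp (T : E →L[ℝ] F) {x : ℕ → E} (h : WeaklyNull x) :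
    WeaklyNull (fun n => T (x n)) := fun φ => h (φ.comp T)

lemma weaklyPSummable_comp (p : ℝ≥0∞) (T : E →L[ℝ] F) {x : ℕ → E}
    (h : WeaklyPSummable p x) : WeaklyPSummable p (fun n => T (x n)) := by
  unfold WeaklyPSummable at h ⊢
  split_ifs at h ⊢ with h'
  · exact weaklyNull_comp T h
  · exact fun φ => h (φ.comp T)

lemma dunfordPettis_image (T : E →L[ℝ] F) {K : Set E} (h : DunfordPettisSet K) :
    DunfordPettisSet (T '' K) := by
  refine ⟨(T.lipschitz.isBounded_image h.1), ?_⟩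
  intro f hf ε hε
  have hwn : WeaklyNull (fun n => (f n).comp T) := by
    intro Φ
    exact hf (Φ.comp (opAdjoint T))
  obtain ⟨N, hN⟩ := h.2 (fun n => (f n).comp T) hwn ε hε
  refine ⟨N, ?_⟩
  rintro n hn y ⟨z, hz, rfl⟩
  exact hN n hn z hz

lemma pRightNull_comp (p : ℝ≥0∞) (T : E →L[ℝ] F) {x : ℕ → E} (h : PRightNull p x) :
    PRightNull p (fun n => T (x n)) := by
  refine ⟨weaklyPSummable_comp p T h.1, ?_⟩
  have hr : Set.range (fun n => T (x n)) = T '' Set.range x := by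
    rw [← Set.range_comp]; rfl
  rw [hr]
  exact dunfordPettis_image T h.2

end Aux

section LpAux

variable {X : ℕ → Type*} [∀ n, NormedAddCommGroup (X n)] [∀ n, NormedSpace ℝ (X n)]

/-- Coordinate projection as a continuous linear map. -/
def lpProj (n : ℕ) : lp X 1 →L[ℝ] X n :=
  LinearMap.mkContinuous
    { toFun := fun f => f n
      map_add' := fun f g => by simp only [lp.coeFn_add, Pi.add_apply]
      map_smul' := fun c f => by simp only [lp.coeFn_smul, Pi.smul_apply, RingHom.id_apply] }
    1 (fun f => by show ‖(f : ∀ i, X i) n‖ ≤ 1 * ‖f‖; simpa using lp.norm_apply_le_norm one_ne_zero f n)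

@[simp] lemma lpProj_apply (n : ℕ) (f : lp X 1) : lpProj n f = f n := rfl

lemma lp_single_add (n : ℕ) (a b : X n) :
    (lp.single 1 n (a + b) : lp X 1) = lp.single 1 n a + lp.single 1 n b := by
  apply lp.ext
  funext j
  by_cases h : j = n
  · subst h
    simp [lp.coeFn_add, lp.single_apply_self]
  · simp [lp.coeFn_add, lp.single_apply_ne _ _ _ h]

lemma lp_norm_single (n : ℕ) (v : X n) : ‖(lp.single 1 n v : lp X 1)‖ = ‖v‖ := by
  have h : (0 : ℝ) < (1 : ℝ≥0∞).toReal := by norm_num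
  have := lp.norm_single (E := X) (p := 1) (by norm_num) n v
  simpa using this

/-- The coordinate embedding as a continuous linear map. -/
def lpSingle (n : ℕ) : X n →L[ℝ] lp X 1 :=
  LinearMap.mkContinuous
    { toFun := fun v => lp.single 1 n v
      map_add' := fun a b => lp_single_add n a b
      map_smul' := fun c v => (lp.single_smul 1 n c v) }
    1 (fun v => by
      show ‖(lp.single 1 n v : lp X 1)‖ ≤ 1 * ‖v‖
      rw [lp_norm_single, one_mul])

lemma lp_hasSum_norm1 (y : lp X 1) : HasSum (fun i => ‖y i‖) ‖y‖ := by
  have := lp.hasSum_norm (E := X) (p := 1) (by norm_num) y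
  simpa using this

lemma exists_norming {n : ℕ} [CompleteSpace (X n)] (v : X n) :
    ∃ φ : X n →L[ℝ] ℝ, ‖φ‖ ≤ 1 ∧ φ v = ‖v‖ := by
  obtain ⟨g, hg1, hg2⟩ := exists_dual_vector'' ℝ v
  exact ⟨g, hg1, by exact_mod_cast hg2⟩

end LpAux


set_option maxHeartbeats 2000000 in
theorem stmt10 (X : ℕ → Type*) [∀ n, NormedAddCommGroup (X n)] [∀ n, NormedSpace ℝ (X n)]
    [∀ n, CompleteSpace (X n)] (p : ℝ≥0∞) (hp : 1 ≤ p) :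
    (∀ n, HasDPrcP p (X n)) ↔ HasDPrcP p (lp X 1) := by
  constructor
  · -- each `X n` has the property ⟹ the ℓ¹-sum has it
    intro h x hx
    by_contra hcon
    rw [NormNull, Metric.tendsto_atTop] at hcon
    push_neg at hcon
    obtain ⟨ε, hε, hfr⟩ := hcon
    have hfr' : ∃ᶠ j in atTop, ε ≤ ‖x j‖ := by
      refine Filter.frequently_atTop.mpr fun N => ?_
      obtain ⟨j, hj1, hj2⟩ := hfr N
      exact ⟨j, hj1, by simpa [Real.dist_eq] using hj2⟩
    have hcoord : ∀ n, Tendsto (fun j => ‖(x j : ∀ i, X i) n‖) atTop (𝓝 0) := by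
      intro n
      have h2 := h n _ (pRightNull_comp p (lpProj n) hx)
      unfold NormNull at h2
      simpa only [lpProj_apply] using h2
    have hε8 : (0 : ℝ) < ε / 8 := by linarith
    -- one step of the gliding hump
    have hstep : ∀ q : ℕ × ℕ, ∃ r : ℕ × ℕ, q.1 < r.1 ∧ q.2 < r.2 ∧ ε ≤ ‖x r.1‖ ∧
        (∑ n ∈ Finset.range q.2, ‖(x r.1 : ∀ i, X i) n‖) < ε / 8 ∧
        ‖x r.1‖ - ε / 8 < ∑ n ∈ Finset.range r.2, ‖(x r.1 : ∀ i, X i) n‖ := by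
      rintro ⟨J, m⟩
      have hhead : Tendsto (fun j => ∑ n ∈ Finset.range m, ‖(x j : ∀ i, X i) n‖)
          atTop (𝓝 0) := by
        have := tendsto_finset_sum (Finset.range m) (fun n _ => hcoord n)
        simpa using this
      have hev : ∀ᶠ j in atTop, (∑ n ∈ Finset.range m, ‖(x j : ∀ i, X i) n‖) < ε / 8 :=
        hhead.eventually_lt_const hε8
      obtain ⟨j, hjJ, hj1, hj2⟩ := Filter.frequently_atTop'.mp (hfr'.and_eventually hev) J
      have hps := (lp_hasSum_norm1 (x j)).tendsto_sum_nat
      have hev2 : ∀ᶠ m' in atTop,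
          ‖x j‖ - ε / 8 < ∑ n ∈ Finset.range m', ‖(x j : ∀ i, X i) n‖ :=
        hps.eventually_const_lt (by linarith)
      obtain ⟨m', hm1, hm2⟩ := (hev2.and (Filter.eventually_gt_atTop m)).exists
      exact ⟨(j, m'), hjJ, hm2, hj1, hj2, hm1⟩
    choose step hstep1 hstep2 hstep3 hstep4 hstep5 using hstep
    set t : ℕ → ℕ × ℕ := fun i => step^[i] (0, 0) with ht
    have htsucc : ∀ i, t (i + 1) = step (t i) := fun i =>
      Function.iterate_succ_apply' step i (0, 0)
    set J : ℕ → ℕ := fun i => (t (i + 1)).1 with hJ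
    set M : ℕ → ℕ := fun i => (t i).2 with hM
    have hM0 : M 0 = 0 := rfl
    have hMlt : ∀ i, M i < M (i + 1) := by
      intro i
      have := hstep2 (t i)
      rwa [← htsucc i] at this
    have hMmono : StrictMono M := strictMono_nat_of_lt_succ hMlt
    have hA : ∀ i, ε ≤ ‖x (J i)‖ := by
      intro i; have := hstep3 (t i); rwa [← htsucc i] at this
    have hB : ∀ i, (∑ n ∈ Finset.range (M i), ‖(x (J i) : ∀ k, X k) n‖) < ε / 8 := by
      intro i; have := hstep4 (t i); rwa [← htsucc i] at this
    have hC : ∀ i, ‖x (J i)‖ - ε / 8 <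
        ∑ n ∈ Finset.range (M (i + 1)), ‖(x (J i) : ∀ k, X k) n‖ := by
      intro i; have := hstep5 (t i); rwa [← htsucc i] at this
    have hblock : ∀ i, 3 * ε / 4 <
        ∑ n ∈ Finset.Ico (M i) (M (i + 1)), ‖(x (J i) : ∀ k, X k) n‖ := by
      intro i
      have hsub : (∑ n ∈ Finset.Ico 0 (M i), ‖(x (J i) : ∀ k, X k) n‖) +
          (∑ n ∈ Finset.Ico (M i) (M (i + 1)), ‖(x (J i) : ∀ k, X k) n‖) =
          ∑ n ∈ Finset.Ico 0 (M (i + 1)), ‖(x (J i) : ∀ k, X k) n‖ :=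
        Finset.sum_Ico_consecutive _ (Nat.zero_le _) (hMlt i).le
      have h1 := hA i
      have h2 := hB i
      have h3 := hC i
      rw [Finset.range_eq_Ico] at h2 h3
      linarith
    have hφex : ∀ i n, ∃ φ : X n →L[ℝ] ℝ, ‖φ‖ ≤ 1 ∧
        φ ((x (J i) : ∀ k, X k) n) = ‖(x (J i) : ∀ k, X k) n‖ :=
      fun i n => exists_norming _
    choose φ hφ1 hφ2 using hφex
    set f : ℕ → (lp X 1 →L[ℝ] ℝ) :=
      fun i => ∑ n ∈ Finset.Ico (M i) (M (i + 1)), (φ i n).comp (lpProj n) with hf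
    have hfeval : ∀ i (y : lp X 1),
        f i y = ∑ n ∈ Finset.Ico (M i) (M (i + 1)), φ i n ((y : ∀ k, X k) n) := by
      intro i y
      simp [hf, ContinuousLinearMap.sum_apply]
    have hfx : ∀ i, f i (x (J i)) =
        ∑ n ∈ Finset.Ico (M i) (M (i + 1)), ‖(x (J i) : ∀ k, X k) n‖ := by
      intro i
      rw [hfeval]
      exact Finset.sum_congr rfl fun n _ => hφ2 i n
    have hfy : ∀ i (y : lp X 1),
        |f i y| ≤ ∑ n ∈ Finset.Ico (M i) (M (i + 1)), ‖(y : ∀ k, X k) n‖ := by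
      intro i y
      rw [hfeval]
      refine (Finset.abs_sum_le_sum_abs _ _).trans (Finset.sum_le_sum fun n _ => ?_)
      calc |φ i n ((y : ∀ k, X k) n)| ≤ ‖φ i n‖ * ‖(y : ∀ k, X k) n‖ :=
            (φ i n).le_opNorm _
        _ ≤ 1 * ‖(y : ∀ k, X k) n‖ :=
            mul_le_mul_of_nonneg_right (hφ1 i n) (norm_nonneg _)
        _ = ‖(y : ∀ k, X k) n‖ := one_mul _
    have hunion : ∀ m (y : lp X 1),
        (∑ i ∈ Finset.range m, ∑ n ∈ Finset.Ico (M i) (M (i + 1)), ‖(y : ∀ k, X k) n‖) ≤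
          ‖y‖ := by
      intro m y
      have h1 : (∑ i ∈ Finset.range m, ∑ n ∈ Finset.Ico (M i) (M (i + 1)),
          ‖(y : ∀ k, X k) n‖) = ∑ n ∈ Finset.Ico (M 0) (M m), ‖(y : ∀ k, X k) n‖ := by
        induction m with
        | zero => simp
        | succ m ih =>
            rw [Finset.sum_range_succ, ih,
              Finset.sum_Ico_consecutive _ (hMmono.monotone (Nat.zero_le m)) (hMlt m).le]
      rw [h1, hM0, ← Finset.range_eq_Ico]
      exact sum_le_hasSum _ (fun n _ => norm_nonneg _) (lp_hasSum_norm1 y)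
    have hnorm : ∀ (a : ℕ → ℝ) (m : ℕ), (∀ i, |a i| ≤ 1) →
        ‖∑ i ∈ Finset.range m, a i • f i‖ ≤ 1 := by
      intro a m ha
      refine ContinuousLinearMap.opNorm_le_bound _ zero_le_one fun y => ?_
      rw [one_mul]
      calc ‖(∑ i ∈ Finset.range m, a i • f i) y‖
          = |∑ i ∈ Finset.range m, a i * f i y| := by
            simp [ContinuousLinearMap.sum_apply, Real.norm_eq_abs, smul_eq_mul]
        _ ≤ ∑ i ∈ Finset.range m, |a i * f i y| := Finset.abs_sum_le_sum_abs _ _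
        _ ≤ ∑ i ∈ Finset.range m, ∑ n ∈ Finset.Ico (M i) (M (i + 1)),
              ‖(y : ∀ k, X k) n‖ := by
            refine Finset.sum_le_sum fun i _ => ?_
            rw [abs_mul]
            calc |a i| * |f i y| ≤ 1 * |f i y| :=
                  mul_le_mul_of_nonneg_right (ha i) (abs_nonneg _)
              _ = |f i y| := one_mul _
              _ ≤ _ := hfy i y
        _ ≤ ‖y‖ := hunion m y
    have hwn : WeaklyNull f := by
      intro Φ
      have hsum : ∀ m, (∑ i ∈ Finset.range m, |Φ (f i)|) ≤ ‖Φ‖ := by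
        intro m
        set a : ℕ → ℝ := fun i => if 0 ≤ Φ (f i) then 1 else -1 with haa
        have ha : ∀ i, |a i| ≤ 1 := by
          intro i; rw [haa]; dsimp only; split <;> simp
        have h1 : (∑ i ∈ Finset.range m, |Φ (f i)|) =
            Φ (∑ i ∈ Finset.range m, a i • f i) := by
          rw [map_sum]
          refine Finset.sum_congr rfl fun i _ => ?_
          rw [map_smul, haa]
          dsimp only
          split_ifs with hpos
          · simp [abs_of_nonneg hpos]
          · simp [abs_of_neg (lt_of_not_ge hpos)]
        rw [h1]
        calc Φ (∑ i ∈ Finset.range m, a i • f i)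
            ≤ |Φ (∑ i ∈ Finset.range m, a i • f i)| := le_abs_self _
          _ ≤ ‖Φ‖ * ‖∑ i ∈ Finset.range m, a i • f i‖ := Φ.le_opNorm _
          _ ≤ ‖Φ‖ * 1 := mul_le_mul_of_nonneg_left (hnorm a m ha) (norm_nonneg _)
          _ = ‖Φ‖ := mul_one _
      have hsummable : Summable fun i => |Φ (f i)| :=
        summable_of_sum_range_le (fun i => abs_nonneg _) hsum
      exact (tendsto_zero_iff_abs_tendsto_zero _).mpr hsummable.tendsto_atTop_zero
    obtain ⟨N, hN⟩ := hx.2.2 f hwn (3 * ε / 4) (by linarith)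
    have h1 := hN N le_rfl (x (J N)) ⟨J N, rfl⟩
    have h2 := hblock N
    rw [hfx N, abs_of_nonneg (Finset.sum_nonneg fun n _ => norm_nonneg _)] at h1
    linarith
  · -- the ℓ¹-sum has the property ⟹ each `X n` has it
    intro h n x hx
    have h2 := h _ (pRightNull_comp p (lpSingle n) hx)
    unfold NormNull at h2 ⊢
    refine h2.congr fun k => ?_
    exact lp_norm_single n (x k)
end
end
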